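/- Let R be a ring with 1 satisfying the polynomial identity [x,y][u,v] = 0 (i.e., (xy − yx)(uv − vu) = 0 for all x,y,u,v ∈ R), let n ≥ 1, and let A be an n×n matrix over R with symmetric characteristic polynomial p(x) = λ_0 + λ_1 x + ⋯ + λ_{n−1} x^{n−1} + λ_n x^n, where λ_n = n!. Then the Cayley–Hamilton identity with sandwich coefficients Σ_{0 ≤ i,j ≤ n} A^i (λ_i λ_j) A^j = 0 holds, where A^i (λ_i λ_j) A^j denotes the matrix product of A^i, the scalar matrix (λ_i λ_j)·I, and A^j; in particular the leading coefficient is c_{n,n} = (n!)². -/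

import Mathlib

open Polynomial in
/-- The preadjoint `A*` of an `n × n` matrix `A` over a (possibly noncommutative) ring `R`:
its `(r, s)` entry is the sum, over all permutations `τ, ρ` of `Fin n` with `τ s = s` and
`ρ s = r`, of `sgn ρ` times the ordered product
`a_{τ(1),ρ(τ(1))} ⋯ a_{τ(s-1),ρ(τ(s-1))} · a_{τ(s+1),ρ(τ(s+1))} ⋯ a_{τ(n),ρ(τ(n))}`
(the factor at position `s` is omitted). -/
def Matrix.preadjoint {n : ℕ} {R : Type*} [Ring R] (A : Matrix (Fin n) (Fin n) R) :
    Matrix (Fin n) (Fin n) R :=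
  fun r s =>
    ∑ τ : Equiv.Perm (Fin n), ∑ ρ : Equiv.Perm (Fin n),
      if τ s = s ∧ ρ s = r then
        ((Equiv.Perm.sign ρ : ℤ)) •
          (((List.finRange n).filter (fun k => k ≠ s)).map
            (fun k => A (τ k) (ρ (τ k)))).prod
      else 0

open Polynomial in
/-- The characteristic matrix `x·I - A` of `A`, as a matrix over `R[x]`. -/
noncomputable def Matrix.charMat {n : ℕ} {R : Type*} [Ring R] (A : Matrix (Fin n) (Fin n) R) :
    Matrix (Fin n) (Fin n) R[X] :=
  (X : R[X]) • (1 : Matrix (Fin n) (Fin n) R[X]) - A.map C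

/-- The symmetric determinant `s-det A = tr(A* · A) = tr(A · A*)`. -/
def Matrix.sdet {n : ℕ} {R : Type*} [Ring R] (A : Matrix (Fin n) (Fin n) R) : R :=
  Matrix.trace (A.preadjoint * A)

open Polynomial in
/-- The symmetric characteristic polynomial `p(x) = s-det(x·I - A) ∈ R[x]`. -/
noncomputable def Matrix.sCharPoly {n : ℕ} {R : Type*} [Ring R] (A : Matrix (Fin n) (Fin n) R) : R[X] :=
  A.charMat.sdet


/-! Modulo the two-sided ideal `T` generated by the commutators, `R/T` is commutative, and there
the symmetric determinant is `n!` times the ordinary one, so `p(x)` becomes `n!` times the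
characteristic polynomial of the image of `A`. By Cayley–Hamilton, both `L = ∑ Aⁱ λᵢ` and
`M = ∑ λⱼ Aʲ` have all their entries in `T`. The identity `[x,y][u,v] = 0` forces `T · T = 0`,
so the sandwich sum, which factors as `L · M`, vanishes. The leading coefficient `λₙ` is read off
from the degree-one parts of the entries of `xI − A`: it is `s-det 1 = n!`. -/

open Polynomial Finset

theorem List.length_filter_ne_finRange_add_one {n : ℕ} (s : Fin n) :
    ((List.finRange n).filter (fun k => k ≠ s)).length + 1 = n := by
  rw [← List.toFinset_card_of_nodup ((List.nodup_finRange n).filter _), List.toFinset_filter,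
    List.toFinset_finRange]
  simp [Finset.filter_ne', Nat.sub_add_cancel s.pos]

theorem List.prod_map_filter_ne_finRange {M : Type*} [CommMonoid M] {n : ℕ} (s : Fin n)
    (f : Fin n → M) :
    (((List.finRange n).filter (fun k => k ≠ s)).map f).prod = ∏ k ∈ univ.erase s, f k := by
  rw [← List.prod_toFinset f ((List.nodup_finRange n).filter _)]
  congr 1
  ext k
  simp

theorem Equiv.Perm.card_filter_apply_self_eq_factorial {n : ℕ} (s : Fin n) :
    #{τ : Equiv.Perm (Fin n) | τ s = s} = (n - 1).factorial := by
  have e : {τ : Equiv.Perm (Fin n) // τ s = s} ≃ Equiv.Perm {k : Fin n // k ≠ s} :=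
    (Equiv.subtypeEquivRight fun τ =>
      ⟨fun h k hk => by rwa [not_not.mp hk], fun h => h s (by simp)⟩).trans
      (Equiv.Perm.subtypeEquivSubtypePerm (· ≠ s)).symm
  rw [← Fintype.card_subtype, Fintype.card_congr e, Fintype.card_perm,
    Fintype.card_subtype_compl, Fintype.card_subtype_eq, Fintype.card_fin]

namespace Matrix

variable {n : ℕ} {R : Type*} [Ring R]

theorem sdet_eq_sum (B : Matrix (Fin n) (Fin n) R) :
    B.sdet = ∑ s : Fin n, ∑ τ : Equiv.Perm (Fin n) with τ s = s, ∑ ρ : Equiv.Perm (Fin n),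
      (Equiv.Perm.sign ρ : ℤ) •
        ((((List.finRange n).filter (fun k => k ≠ s)).map
          (fun k => B (τ k) (ρ (τ k)))).prod * B s (ρ s)) := by
  simp only [sdet, trace, diag_apply, mul_apply, preadjoint, sum_mul, ite_mul, zero_mul,
    smul_mul_assoc, ite_and]
  rw [sum_comm]
  refine sum_congr rfl fun s _ => ?_
  rw [sum_comm, sum_filter]
  refine sum_congr rfl fun τ _ => ?_
  rw [sum_comm]
  split_ifs <;> simp

theorem charMat_apply (A : Matrix (Fin n) (Fin n) R) (i j : Fin n) :
    A.charMat i j = (if i = j then X else 0) - C (A i j) := by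
  simp [charMat, one_apply]

section Map

variable {S : Type*} [Ring S]

theorem preadjoint_map (f : R →+* S) (A : Matrix (Fin n) (Fin n) R) :
    (A.map f).preadjoint = A.preadjoint.map f := by
  ext r s
  simp only [preadjoint, map_apply, map_sum, apply_ite f, map_zero, map_zsmul, map_list_prod,
    List.map_map]
  rfl

theorem sdet_map (f : R →+* S) (A : Matrix (Fin n) (Fin n) R) : (A.map f).sdet = f A.sdet := by
  rw [sdet, sdet, preadjoint_map, ← Matrix.map_mul, AddMonoidHom.map_trace f]

theorem charMat_map (f : R →+* S) (A : Matrix (Fin n) (Fin n) R) :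
    (A.map f).charMat = A.charMat.map (mapRingHom f) := by
  ext i j
  simp only [charMat_apply, map_apply, coe_mapRingHom, Polynomial.map_sub, map_C]
  split_ifs <;> simp

theorem sCharPoly_map (f : R →+* S) (A : Matrix (Fin n) (Fin n) R) :
    (A.map f).sCharPoly = A.sCharPoly.map f := by
  rw [sCharPoly, sCharPoly, charMat_map, sdet_map]
  rfl

end Map

section CommRing

variable {S : Type*} [CommRing S]

theorem sum_sign_smul_prod_filter_ne_eq_det (B : Matrix (Fin n) (Fin n) S) {s : Fin n}
    {τ : Equiv.Perm (Fin n)} (hτ : τ s = s) :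
    ∑ ρ : Equiv.Perm (Fin n), (Equiv.Perm.sign ρ : ℤ) •
      ((((List.finRange n).filter (fun k => k ≠ s)).map
        (fun k => B (τ k) (ρ (τ k)))).prod * B s (ρ s)) = B.det := by
  have hsupp : {k | τ k ≠ k} ⊆ (univ.erase s : Finset (Fin n)) := fun k hk =>
    mem_erase.mpr ⟨fun h => hk (h ▸ hτ), mem_univ k⟩
  rw [← det_transpose, det_apply]
  refine sum_congr rfl fun ρ _ => ?_
  rw [List.prod_map_filter_ne_finRange, Equiv.Perm.prod_comp τ _ (fun k => B k (ρ k)) hsupp,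
    prod_erase_mul _ _ (mem_univ s), Units.smul_def]
  rfl

theorem sdet_eq_factorial_smul_det (hn : 1 ≤ n) (B : Matrix (Fin n) (Fin n) S) :
    B.sdet = n.factorial • B.det := by
  calc B.sdet = ∑ s : Fin n, ∑ τ : Equiv.Perm (Fin n) with τ s = s, B.det :=
        sdet_eq_sum B ▸ sum_congr rfl fun s _ => sum_congr rfl fun τ hτ =>
          sum_sign_smul_prod_filter_ne_eq_det B (mem_filter.mp hτ).2
    _ = n.factorial • B.det := by
        simp only [sum_const, Equiv.Perm.card_filter_apply_self_eq_factorial, card_univ,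
          Fintype.card_fin, smul_smul, Nat.mul_factorial_pred (by omega : n ≠ 0)]

theorem charMat_eq_charmatrix (B : Matrix (Fin n) (Fin n) S) : B.charMat = B.charmatrix := by
  ext i j
  by_cases h : i = j <;> simp [charMat_apply, charmatrix, h]

theorem sCharPoly_eq_factorial_smul_charpoly (hn : 1 ≤ n) (B : Matrix (Fin n) (Fin n) S) :
    B.sCharPoly = n.factorial • B.charpoly := by
  rw [sCharPoly, sdet_eq_factorial_smul_det hn, charMat_eq_charmatrix, charpoly]

theorem natDegree_sCharPoly_le (hn : 1 ≤ n) (B : Matrix (Fin n) (Fin n) S) :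
    B.sCharPoly.natDegree ≤ n := by
  nontriviality S
  rw [sCharPoly_eq_factorial_smul_charpoly hn]
  exact (natDegree_smul_le _ _).trans (by simp)

theorem aeval_self_sCharPoly (hn : 1 ≤ n) (B : Matrix (Fin n) (Fin n) S) :
    aeval B B.sCharPoly = 0 := by
  rw [sCharPoly_eq_factorial_smul_charpoly hn, map_nsmul, aeval_self_charpoly, smul_zero]

end CommRing

theorem natDegree_charMat_le (A : Matrix (Fin n) (Fin n) R) (i j : Fin n) :
    (A.charMat i j).natDegree ≤ 1 := by
  rw [charMat_apply]
  refine (natDegree_sub_le _ _).trans (max_le ?_ (by simp))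
  split_ifs
  · exact natDegree_X_le
  · simp

theorem map_coeff_one_charMat (A : Matrix (Fin n) (Fin n) R) :
    A.charMat.map (fun p => p.coeff 1) = 1 := by
  ext i j
  by_cases h : i = j <;> simp [charMat_apply, one_apply, h]

theorem coeff_sdet_of_natDegree_le_one (B : Matrix (Fin n) (Fin n) R[X])
    (hB : ∀ i j, (B i j).natDegree ≤ 1) : B.sdet.coeff n = (B.map fun p => p.coeff 1).sdet := by
  simp only [sdet_eq_sum, finsetSum_coeff, coeff_smul, map_apply]
  refine sum_congr rfl fun s _ => sum_congr rfl fun τ _ => sum_congr rfl fun ρ _ => ?_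
  congr 1
  set l := ((List.finRange n).filter (fun k => k ≠ s)).map (fun k => B (τ k) (ρ (τ k))) ++
    [B s (ρ s)]
  have hlen : l.length * 1 = n := by
    simpa [l] using List.length_filter_ne_finRange_add_one s
  have hl : ∀ p ∈ l, p.natDegree ≤ 1 := by
    simp only [l, List.mem_append, List.mem_map, List.mem_singleton]
    rintro p (⟨k, -, rfl⟩ | rfl) <;> exact hB _ _
  have := coeff_list_prod_of_natDegree_le l 1 hl
  rw [hlen] at this
  simpa [l, Function.comp_def] using this

theorem sdet_one (hn : 1 ≤ n) : (1 : Matrix (Fin n) (Fin n) R).sdet = n.factorial := by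
  rw [← Matrix.map_one (Int.castRingHom R) (map_zero _) (map_one _), sdet_map,
    sdet_eq_factorial_smul_det hn, det_one]
  simp

theorem coeff_sCharPoly_self (hn : 1 ≤ n) (A : Matrix (Fin n) (Fin n) R) :
    A.sCharPoly.coeff n = n.factorial := by
  rw [sCharPoly, coeff_sdet_of_natDegree_le_one _ (natDegree_charMat_le A),
    map_coeff_one_charMat, sdet_one hn]

end Matrix

namespace TwoSidedIdeal

variable {R : Type*} [Ring R]

theorem mul_eq_zero_of_mem_span {s t : Set R} (hst : ∀ x ∈ s, ∀ r, ∀ y ∈ t, x * r * y = 0)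
    {x y : R} (hx : x ∈ span s) (hy : y ∈ span t) : x * y = 0 := by
  suffices ∀ r, x * r * y = 0 by simpa using this 1
  induction hx using span_induction generalizing y with
  | mem x hx =>
    intro r
    induction hy using span_induction generalizing r with
    | mem y hy => exact hst x hx r y hy
    | zero => simp
    | add y z _ _ hy hz => rw [mul_add, hy, hz, add_zero]
    | neg y _ hy => rw [mul_neg, hy, neg_zero]
    | left_absorb a y _ hy => rw [← mul_assoc, mul_assoc x r a, hy]
    | right_absorb b y _ hy => rw [← mul_assoc, hy, zero_mul]
  | zero => simp
  | add x z _ _ hx hz => intro r; rw [add_mul, add_mul, hx hy, hz hy, add_zero]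
  | neg x _ hx => intro r; rw [neg_mul, neg_mul, hx hy, neg_zero]
  | left_absorb a x _ hx => intro r; rw [mul_assoc, mul_assoc, ← mul_assoc x, hx hy, mul_zero]
  | right_absorb b x _ hx => intro r; rw [mul_assoc x, hx hy]

end TwoSidedIdeal

def commutatorIdeal (R : Type*) [Ring R] : TwoSidedIdeal R :=
  .span {x | ∃ u v : R, x = u * v - v * u}

instance (R : Type*) [Ring R] : CommRing (commutatorIdeal R).ringCon.Quotient where
  mul_comm := by
    rintro ⟨a⟩ ⟨b⟩
    exact Quot.sound ((TwoSidedIdeal.rel_iff _ _ _).mpr (TwoSidedIdeal.subset_span ⟨a, b, rfl⟩))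

section CommutatorIdentity

variable {R : Type*} [Ring R] (hR : ∀ x y u v : R, (x * y - y * x) * (u * v - v * u) = 0)
include hR

theorem commutator_mul_mul_commutator_eq_zero (u v r u' v' : R) :
    (u * v - v * u) * r * (u' * v' - v' * u') = 0 := by
  -- `[u,v] r = r [u,v] + [[u,v], r]`, and right multiplication by a commutator kills both terms.
  have hcomm : (u * v - v * u) * r =
      r * (u * v - v * u) + ((u * v - v * u) * r - r * (u * v - v * u)) := by
    abel
  rw [hcomm, add_mul, mul_assoc, hR, mul_zero, hR, add_zero]

theorem mul_eq_zero_of_mem_commutatorIdeal {x y : R} (hx : x ∈ commutatorIdeal R)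
    (hy : y ∈ commutatorIdeal R) : x * y = 0 := by
  refine TwoSidedIdeal.mul_eq_zero_of_mem_span ?_ hx hy
  rintro _ ⟨u, v, rfl⟩ r _ ⟨u', v', rfl⟩
  exact commutator_mul_mul_commutator_eq_zero hR u v r u' v'

end CommutatorIdentity

namespace Matrix

variable {m : Type*} [Fintype m] [DecidableEq m] {R S : Type*} [Ring R]

theorem sum_sandwich_eq_mul (A : Matrix m m R) (c : ℕ → R) (N : ℕ) :
    ∑ i ∈ range N, ∑ j ∈ range N, A ^ i * ((c i * c j) • (1 : Matrix m m R)) * A ^ j =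
      (∑ i ∈ range N, A ^ i * (c i • 1)) * ∑ j ∈ range N, (c j • 1) * A ^ j := by
  rw [sum_mul_sum]
  refine sum_congr rfl fun i _ => sum_congr rfl fun j _ => ?_
  rw [mul_assoc (A ^ i) (c i • 1), ← mul_assoc (c i • 1), smul_mul_assoc, one_mul, smul_smul,
    mul_assoc]

omit [Fintype m] in
theorem map_smul_one [Ring S] (f : R →+* S) (a : R) :
    (a • (1 : Matrix m m R)).map f = f a • 1 := by
  rw [smul_one_eq_diagonal, diagonal_map (map_zero f), smul_one_eq_diagonal]

omit [Fintype m] [DecidableEq m] in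
theorem apply_mem_of_map_ringCon_mk'_eq_zero {I : TwoSidedIdeal R} {L : Matrix m m R}
    (h : L.map I.ringCon.mk' = 0) (p q : m) : L p q ∈ I := by
  rw [← TwoSidedIdeal.ker_ringCon_mk' I, TwoSidedIdeal.mem_ker]
  exact congr_fun₂ h p q

section CommRing

variable [CommRing S]

theorem sum_pow_mul_coeff_smul_one (B : Matrix m m S) {p : S[X]} {N : ℕ}
    (hp : p.natDegree < N) : ∑ i ∈ range N, B ^ i * (p.coeff i • 1) = aeval B p := by
  simp [aeval_eq_sum_range' hp]

theorem sum_coeff_smul_one_mul_pow (B : Matrix m m S) {p : S[X]} {N : ℕ}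
    (hp : p.natDegree < N) : ∑ i ∈ range N, (p.coeff i • 1) * B ^ i = aeval B p := by
  simp [aeval_eq_sum_range' hp]

variable {n : ℕ} (hn : 1 ≤ n) (f : R →+* S) (A : Matrix (Fin n) (Fin n) R)
include hn

theorem map_sum_pow_mul_coeff_sCharPoly_smul_one :
    (∑ i ∈ range (n + 1), A ^ i * (A.sCharPoly.coeff i • 1)).map f = 0 := by
  change f.mapMatrix _ = 0
  simp only [map_sum, map_mul, map_pow, RingHom.mapMatrix_apply, map_smul_one, ← coeff_map,
    ← sCharPoly_map]
  rw [sum_pow_mul_coeff_smul_one _ (Nat.lt_succ_of_le (natDegree_sCharPoly_le hn _)),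
    aeval_self_sCharPoly hn]

theorem map_sum_coeff_sCharPoly_smul_one_mul_pow :
    (∑ i ∈ range (n + 1), (A.sCharPoly.coeff i • 1) * A ^ i).map f = 0 := by
  change f.mapMatrix _ = 0
  simp only [map_sum, map_mul, map_pow, RingHom.mapMatrix_apply, map_smul_one, ← coeff_map,
    ← sCharPoly_map]
  rw [sum_coeff_smul_one_mul_pow _ (Nat.lt_succ_of_le (natDegree_sCharPoly_le hn _)),
    aeval_self_sCharPoly hn]

end CommRing

end Matrix

open Polynomial in
/-- Theorem 3.1: if `R` satisfies the polynomial identity `[x,y][u,v] = 0` and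
`p(x) = λ₀ + λ₁x + ⋯ + λₙxⁿ` (with `λₙ = n!`) is the symmetric characteristic polynomial of an
`n × n` matrix `A` over `R` (`n ≥ 1`), then the invariant Cayley–Hamilton identity with sandwich
coefficients `∑_{0 ≤ i,j ≤ n} Aⁱ (λᵢλⱼ) Aʲ = 0` holds; in particular the leading sandwich
coefficient is `λₙλₙ = (n!)²`. -/
theorem cayley_hamilton_sandwich
    {n : ℕ} (hn : 1 ≤ n) {R : Type*} [Ring R]
    (hR : ∀ x y u v : R, (x * y - y * x) * (u * v - v * u) = 0)
    (A : Matrix (Fin n) (Fin n) R) :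
    (∑ i ∈ Finset.range (n + 1), ∑ j ∈ Finset.range (n + 1),
      A ^ i * ((A.sCharPoly.coeff i * A.sCharPoly.coeff j) • (1 : Matrix (Fin n) (Fin n) R))
        * A ^ j = 0) ∧
    A.sCharPoly.coeff n * A.sCharPoly.coeff n = ((n.factorial : R)) ^ 2 := by
  refine ⟨?_, by rw [Matrix.coeff_sCharPoly_self hn, sq]⟩
  have hL := Matrix.apply_mem_of_map_ringCon_mk'_eq_zero
    (Matrix.map_sum_pow_mul_coeff_sCharPoly_smul_one hn (commutatorIdeal R).ringCon.mk' A)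
  have hM := Matrix.apply_mem_of_map_ringCon_mk'_eq_zero
    (Matrix.map_sum_coeff_sCharPoly_smul_one_mul_pow hn (commutatorIdeal R).ringCon.mk' A)
  rw [Matrix.sum_sandwich_eq_mul A (fun i => A.sCharPoly.coeff i)]
  ext p q
  rw [Matrix.mul_apply, Matrix.zero_apply]
  exact sum_eq_zero fun k _ => mul_eq_zero_of_mem_commutatorIdeal hR (hL p k) (hM k q)
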